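/- Let ρ be any 4×4 complex density matrix lying in the real convex hull of the three projectors |Φ⁺⟩⟨Φ⁺|, |00⟩⟨00|, |11⟩⟨11| (i.e., ρ = x·|Φ⁺⟩⟨Φ⁺| + y·|00⟩⟨00| + z·|11⟩⟨11| with x, y, z ≥ 0 and x + y + z = 1). Then the BBPSSW parity check succeeds with probability one: Tr[(I₄ ⊗ P_even) · U (ρ ⊗ ρ) U†] = 1, where ρ ⊗ ρ is the Kronecker product acting on the 16-dimensional space of qubits A₁B₁A₂B₂, U is the bilateral CNOT, and P_even is the even-parity projector on the target pair A₂B₂. -/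

import Mathlib

open Matrix Kronecker

namespace BBPSSWParity

/-- Standard basis vector `|0⟩` of `ℂ²`. -/
noncomputable def ket0 : Fin 2 → ℂ := ![1, 0]

/-- Standard basis vector `|1⟩` of `ℂ²`. -/
noncomputable def ket1 : Fin 2 → ℂ := ![0, 1]

/-- `|00⟩ = |0⟩ ⊗ |0⟩ ∈ ℂ⁴`. -/
noncomputable def ket00 : Fin 2 × Fin 2 → ℂ := fun p => ket0 p.1 * ket0 p.2

/-- `|11⟩ = |1⟩ ⊗ |1⟩ ∈ ℂ⁴`. -/
noncomputable def ket11 : Fin 2 × Fin 2 → ℂ := fun p => ket1 p.1 * ket1 p.2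

/-- `|Φ⁺⟩ = (|00⟩ + |11⟩)/√2 ∈ ℂ⁴`. -/
noncomputable def ketPhi : Fin 2 × Fin 2 → ℂ :=
  fun p => (ket00 p + ket11 p) / (Real.sqrt 2 : ℂ)

/-- The projector `|00⟩⟨00|`. -/
noncomputable def proj00 : Matrix (Fin 2 × Fin 2) (Fin 2 × Fin 2) ℂ :=
  vecMulVec ket00 (star ket00)

/-- The projector `|11⟩⟨11|`. -/
noncomputable def proj11 : Matrix (Fin 2 × Fin 2) (Fin 2 × Fin 2) ℂ :=
  vecMulVec ket11 (star ket11)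

/-- The projector `|Φ⁺⟩⟨Φ⁺|`. -/
noncomputable def projPhi : Matrix (Fin 2 × Fin 2) (Fin 2 × Fin 2) ℂ :=
  vecMulVec ketPhi (star ketPhi)

/-- The even-parity projector `P_even = |00⟩⟨00| + |11⟩⟨11|` on the target pair. -/
noncomputable def Peven : Matrix (Fin 2 × Fin 2) (Fin 2 × Fin 2) ℂ :=
  proj00 + proj11

/-- The bilateral CNOT on the four qubits `A₁ B₁ A₂ B₂` (source pair `A₁B₁`,
target pair `A₂B₂`): CNOT from `A₁` to `A₂` and CNOT from `B₁` to `B₂`, where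
`CNOT : |c⟩⊗|t⟩ ↦ |c⟩⊗|t ⊕ c⟩`.  Row index = output, column index = input. -/
noncomputable def bilateralCNOT :
    Matrix ((Fin 2 × Fin 2) × (Fin 2 × Fin 2)) ((Fin 2 × Fin 2) × (Fin 2 × Fin 2)) ℂ :=
  fun r c =>
    if r.1.1 = c.1.1 ∧ r.1.2 = c.1.2 ∧ r.2.1 = c.2.1 + c.1.1 ∧ r.2.2 = c.2.2 + c.1.2
    then 1 else 0

/-- The permutation induced by the bilateral CNOT on basis states. -/
def gfun (c : (Fin 2 × Fin 2) × (Fin 2 × Fin 2)) : (Fin 2 × Fin 2) × (Fin 2 × Fin 2) :=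
  ((c.1.1, c.1.2), (c.2.1 + c.1.1, c.2.2 + c.1.2))

lemma U_apply (r c : (Fin 2 × Fin 2) × (Fin 2 × Fin 2)) :
    bilateralCNOT r c = if r = gfun c then 1 else 0 := by
  simp only [bilateralCNOT, gfun, Prod.ext_iff, and_assoc]

lemma gfun_eq_iff (r k : (Fin 2 × Fin 2) × (Fin 2 × Fin 2)) :
    (r = gfun k) ↔ (gfun r = k) := by
  revert r k; decide

lemma Umul (A : Matrix ((Fin 2 × Fin 2) × (Fin 2 × Fin 2)) ((Fin 2 × Fin 2) × (Fin 2 × Fin 2)) ℂ)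
    (r c : (Fin 2 × Fin 2) × (Fin 2 × Fin 2)) :
    (bilateralCNOT * A) r c = A (gfun r) c := by
  simp only [Matrix.mul_apply, U_apply, gfun_eq_iff, ite_mul, one_mul, zero_mul,
    Finset.sum_ite_eq, Finset.mem_univ, if_true]

lemma mulUH (A : Matrix ((Fin 2 × Fin 2) × (Fin 2 × Fin 2)) ((Fin 2 × Fin 2) × (Fin 2 × Fin 2)) ℂ)
    (r c : (Fin 2 × Fin 2) × (Fin 2 × Fin 2)) :
    (A * bilateralCNOTᴴ) r c = A r (gfun c) := by
  simp only [Matrix.mul_apply, Matrix.conjTranspose_apply, U_apply,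
    gfun_eq_iff]
  simp [apply_ite (star : ℂ → ℂ), mul_ite, Finset.sum_ite_eq]

/-- For any state `ρ = x|Φ⁺⟩⟨Φ⁺| + y|00⟩⟨00| + z|11⟩⟨11|` in the simplex, the BBPSSW
parity check succeeds with probability one:
`Tr[(I₄ ⊗ P_even) · U (ρ ⊗ ρ) U†] = 1`. -/
theorem parity_check_succeeds_with_probability_one (x y z : ℝ)
    (hx : 0 ≤ x) (hy : 0 ≤ y) (hz : 0 ≤ z) (hsum : x + y + z = 1)
    (ρ : Matrix (Fin 2 × Fin 2) (Fin 2 × Fin 2) ℂ)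
    (hρ : ρ = (x : ℂ) • projPhi + (y : ℂ) • proj00 + (z : ℂ) • proj11) :
    (((1 : Matrix (Fin 2 × Fin 2) (Fin 2 × Fin 2) ℂ) ⊗ₖ Peven) *
        (bilateralCNOT * (ρ ⊗ₖ ρ) * bilateralCNOTᴴ)).trace = 1 := by
  have hdiag : ∀ i : Fin 2 × Fin 2, ρ i i =
      (if i = (0,0) then (x/2 + y : ℂ) else 0) + (if i = (1,1) then (x/2 + z : ℂ) else 0) := by
    intro i
    have h2 : ((Real.sqrt 2 : ℂ)) * ((Real.sqrt 2 : ℂ)) = 2 := by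
      rw [← Complex.ofReal_mul, Real.mul_self_sqrt (by norm_num)]
      norm_num
    fin_cases i <;>
      simp [hρ, projPhi, proj00, proj11, ketPhi, ket00, ket11, ket0, ket1,
        vecMulVec_apply, Pi.star_apply, map_div₀, map_add, Complex.conj_ofReal] <;>
      rw [show ((Real.sqrt 2 : ℂ))⁻¹ * ((Real.sqrt 2 : ℂ))⁻¹ = 1/2 by
        rw [← mul_inv, h2]; norm_num] <;> ring
  have hconj : ∀ r c, (bilateralCNOT * (ρ ⊗ₖ ρ) * bilateralCNOTᴴ) r c
      = (ρ ⊗ₖ ρ) (gfun r) (gfun c) := by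
    intro r c
    rw [mulUH, Umul]
  rw [Matrix.trace]
  have hterm : ∀ r, (((1 : Matrix (Fin 2 × Fin 2) (Fin 2 × Fin 2) ℂ) ⊗ₖ Peven) *
        (bilateralCNOT * (ρ ⊗ₖ ρ) * bilateralCNOTᴴ)) r r
      = ∑ k, (((1 : Matrix (Fin 2 × Fin 2) (Fin 2 × Fin 2) ℂ) ⊗ₖ Peven) r k)
          * (ρ ⊗ₖ ρ) (gfun k) (gfun r) := by
    intro r
    rw [Matrix.mul_apply]
    exact Finset.sum_congr rfl fun k _ => by rw [hconj]
  simp only [Matrix.diag_apply, hterm]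
  have d00 := hdiag (0,0); have d01 := hdiag (0,1)
  have d10 := hdiag (1,0); have d11 := hdiag (1,1)
  simp only [Fintype.sum_prod_type, Fin.sum_univ_two,
    Matrix.kroneckerMap_apply, Matrix.one_apply, Peven, proj00, proj11,
    vecMulVec_apply, Pi.star_apply, ket00, ket11, ket0, ket1, Pi.add_apply,
    Matrix.add_apply, gfun]
  norm_num [Prod.ext_iff]
  simp only [show (2:Fin 2) = 0 from rfl, show (1 + 1 : Fin 2) = 0 from rfl, show ((0:Fin 2 × Fin 2)) = ((0,0) : Fin 2 × Fin 2) from rfl,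
    show ((1:Fin 2 × Fin 2)) = ((1,1) : Fin 2 × Fin 2) from rfl]
  rw [d00, d01, d10, d11]
  norm_num
  have hc : (x:ℂ) + y + z = 1 := by exact_mod_cast hsum
  linear_combination ((x:ℂ) + y + z + 1) * hc


end BBPSSWParity
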